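/- arXiv:2507.03465 — 5 statements merged into one kernel-verified Lean document; each statement's English description precedes it below -/
import Mathlib

section
/- Let Σ be a finite nonempty alphabet and let L ⊆ ℬ^Σ be a regular tree language. Then L has asymptotic density 0 (i.e. P_lim(L) = 0) if and only if there exists a tree S ∈ ℬ^Σ such that no tree containing S as a subtree belongs to L, i.e. {T ∈ ℬ^Σ : S ⪯ T} ⊆ ℬ^Σ \ L. -/
/-!
If `S` is forbidden, `L` lies in the set `A` of trees avoiding `S`. Let `b n` be the density of
`A` at size `n`. A tree of `A` with `m + 1` nodes has both root subtrees in `A`, so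
`C (m + 1) * b (m + 1) ≤ ∑ i ≤ m, C i * C (m - i) * b i * b (m - i)`, while `b |S| < 1`
because `S ∉ A`. The Catalan weight of the term `i = |S|` is at least `4 ^ -(|S| + 1)` times the
total, so each pass through this inequality multiplies an eventual upper bound on `b` by a fixed
factor `< 1`, and `b → 0`.

Conversely, suppose that `L` is recognised by a finite automaton and that no tree is forbidden.
Every nonempty tree `T` lies in some accepted tree `c[T]`, and the accepting run reaches `T` in a
state `q` such that `c[X]` is accepted whenever a run reaches `X` in `q`. Since `X ↦ c[X]` is
injective, shifts sizes by `|c|` and `C (n + |c|) ≤ 4 ^ |c| * C n`, the trees reaching such a `q`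
have density `0` if `L` does. But finitely many of these sets cover all nonempty trees, whose
density is `1`.
-/

open Filter Topology

namespace Sparse

inductive BTree (α : Type*) where
  | nil : BTree α
  | node : α → BTree α → BTree α → BTree α

namespace BTree

variable {α : Type*}

/-- The number of nodes of a binary tree. -/
def size : BTree α → ℕ
  | nil => 0
  | node _ l r => size l + size r + 1

/-- `Subtree S T` means `S = T`, or `T` is nonempty and `S` is a subtree of the left or
right subtree of the root of `T`. -/
inductive Subtree : BTree α → BTree α → Prop where
  | refl (T : BTree α) : Subtree T T
  | left {S l r : BTree α} {a : α} : Subtree S l → Subtree S (node a l r)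
  | right {S l r : BTree α} {a : α} : Subtree S r → Subtree S (node a l r)

end BTree

variable {α : Type*}

/-- A run of a tree automaton with transition relation `Δ` on a binary tree: the empty tree is
assigned `none` (i.e. `⊥`), and a nonempty tree with root label `a` and run values `ql`, `qr` on
the two subtrees is assigned a state `q` with `(ql, qr, a, q) ∈ Δ`. -/
inductive Run {Q : Type*} (Δ : Option Q → Option Q → α → Q → Prop) :
    BTree α → Option Q → Prop where
  | nil : Run Δ BTree.nil none
  | node {a : α} {l r : BTree α} {ql qr : Option Q} {q : Q} :
      Run Δ l ql → Run Δ r qr → Δ ql qr a q → Run Δ (BTree.node a l r) (some q)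

/-- A tree automaton with transitions `Δ` and accepting states `F` accepts `T` if some run
assigns `T` a state in `F`. -/
def TAccepts {Q : Type*} (Δ : Option Q → Option Q → α → Q → Prop) (F : Set Q)
    (T : BTree α) : Prop :=
  ∃ q ∈ F, Run Δ T (some q)

/-- A tree language is regular iff it is the set of trees accepted by some tree automaton
with finitely many states. -/
def RegularTreeLang (L : Set (BTree α)) : Prop :=
  ∃ (Q : Type) (_ : Fintype Q) (Δ : Option Q → Option Q → α → Q → Prop) (F : Set Q),
    L = {T | TAccepts Δ F T}

/-- The relative number of `n`-node trees in `L`: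
`|L ∩ ℬ^Σ_n| / (C_n ⬝ |Σ|^n)`, where `C_n` is the `n`-th Catalan number. -/
noncomputable def density [Fintype α] (L : Set (BTree α)) (n : ℕ) : ℝ :=
  (Nat.card {T : BTree α // T ∈ L ∧ T.size = n} : ℝ) /
    ((catalan n : ℝ) * (Fintype.card α : ℝ) ^ n)

/-- `L` has asymptotic density `c` if `density L n` tends to `c` as `n → ∞`. -/
def HasDensity [Fintype α] (L : Set (BTree α)) (c : ℝ) : Prop :=
  Tendsto (density L) atTop (𝓝 c)

/-- The upper asymptotic density `P̄_lim(L) = limsup_n density L n`. -/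
noncomputable def upperDensity [Fintype α] (L : Set (BTree α)) : ℝ :=
  limsup (density L) atTop

/-- `LT = {conc_a(S, T) : a ∈ Σ, S ∈ L}`. -/
def concL (L : Set (BTree α)) (T : BTree α) : Set (BTree α) :=
  {X | ∃ (a : α) (S : BTree α), S ∈ L ∧ X = BTree.node a S T}

/-- `LT⁻¹ = {S : ∃ a, conc_a(S, T) ∈ L}`. -/
def quotR (L : Set (BTree α)) (T : BTree α) : Set (BTree α) :=
  {S | ∃ a : α, BTree.node a S T ∈ L}

/-- `T⁻¹L = {S : ∃ a, conc_a(T, S) ∈ L}`. -/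
def quotL (T : BTree α) (L : Set (BTree α)) : Set (BTree α) :=
  {S | ∃ a : α, BTree.node a T S ∈ L}

/-- `L[T_k, …, T_1]⁻¹`, where the list is `[T_k, …, T_1]` (so the head is `T_k`):
`L[]⁻¹ = L` and `L[T_k,…,T_1]⁻¹ = (L[T_{k-1},…,T_1]⁻¹)T_k⁻¹ ∪ T_k⁻¹(L[T_{k-1},…,T_1]⁻¹)`. -/
def quotIter (L : Set (BTree α)) : List (BTree α) → Set (BTree α)
  | [] => L
  | T :: Ts => quotR (quotIter L Ts) T ∪ quotL T (quotIter L Ts)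

/-- A state `q` is reachable if some run of the automaton on some tree assigns `q` to the tree. -/
def TReachable {Q : Type*} (Δ : Option Q → Option Q → α → Q → Prop) (q : Q) : Prop :=
  ∃ T : BTree α, Run Δ T (some q)

/-- A set of states `V` is a sink if every transition involving a state of `V` as one of the
two child values leads into `V`. -/
def Sink {Q : Type*} (Δ : Option Q → Option Q → α → Q → Prop) (V : Set Q) : Prop :=
  ∀ q ∈ V, ∀ (q' : Option Q) (a : α) (q'' : Q),
    (Δ (some q) q' a q'' ∨ Δ q' (some q) a q'') → q'' ∈ V


namespace BTree

variable {α : Type*}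

lemma size_eq_zero_iff {T : BTree α} : T.size = 0 ↔ T = nil := by
  cases T <;> simp [size]

lemma finite_setOf_size_le [Finite α] (n : ℕ) : {T : BTree α | T.size ≤ n}.Finite := by
  induction n with
  | zero =>
    exact (Set.finite_singleton nil).subset fun _ hT => size_eq_zero_iff.1 (Nat.le_zero.1 hT)
  | succ n ih =>
    refine (((Set.finite_univ (α := α)).prod (ih.prod ih)).image
      fun p => node p.1 p.2.1 p.2.2).insert nil |>.subset ?_
    rintro (_ | ⟨a, l, r⟩) hT
    · exact Set.mem_insert _ _
    · simp only [Set.mem_ofPred_eq, size] at hT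
      exact Set.mem_insert_of_mem _ ⟨(a, l, r), ⟨trivial, show l.size ≤ n by omega, show r.size ≤ n by omega⟩, rfl⟩

inductive Context (α : Type*) where
  | hole : Context α
  | left : α → Context α → BTree α → Context α
  | right : α → BTree α → Context α → Context α

namespace Context

def plug : Context α → BTree α → BTree α
  | hole, X => X
  | left a c r, X => node a (c.plug X) r
  | right a l c, X => node a l (c.plug X)

def size : Context α → ℕ
  | hole => 0
  | left _ c r => c.size + r.size + 1
  | right _ l c => l.size + c.size + 1

lemma size_plug (c : Context α) (X : BTree α) : (c.plug X).size = X.size + c.size := by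
  induction c with
  | hole => rfl
  | left a c r ih => simp only [plug, size, BTree.size, ih]; omega
  | right a l c ih => simp only [plug, size, BTree.size, ih]; omega

lemma plug_injective (c : Context α) : Function.Injective c.plug := by
  induction c with
  | hole => exact fun _ _ h => h
  | left a c r ih => exact fun X Y h => ih (node.inj h).2.1
  | right a l c ih => exact fun X Y h => ih (node.inj h).2.2

end Context

lemma Subtree.exists_plug_eq {S T : BTree α} (h : Subtree S T) :
    ∃ c : Context α, c.plug S = T := by
  induction h with
  | refl => exact ⟨.hole, rfl⟩
  | left _ ih => obtain ⟨c, rfl⟩ := ih; exact ⟨.left _ c _, rfl⟩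
  | right _ ih => obtain ⟨c, rfl⟩ := ih; exact ⟨.right _ _ c, rfl⟩

end BTree

open BTree

namespace Run

variable {Q : Type*} {Δ : Option Q → Option Q → α → Q → Prop}

lemma exists_eq_some {T : BTree α} {o : Option Q} (h : Run Δ T o) (hT : T ≠ BTree.nil) :
    ∃ q, o = some q := by
  cases h with
  | nil => exact absurd rfl hT
  | node => exact ⟨_, rfl⟩

lemma of_plug {c : Context α} {S : BTree α} {o : Option Q} (h : Run Δ (c.plug S) o) :
    ∃ o', Run Δ S o' ∧ ∀ X, Run Δ X o' → Run Δ (c.plug X) o := by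
  induction c generalizing o with
  | hole => exact ⟨o, h, fun _ hX => hX⟩
  | left a c r ih =>
    obtain _ | ⟨hl, hr, hδ⟩ := h
    obtain ⟨o', hS, hX⟩ := ih hl
    exact ⟨o', hS, fun X h => .node (hX X h) hr hδ⟩
  | right a l c ih =>
    obtain _ | ⟨hl, hr, hδ⟩ := h
    obtain ⟨o', hS, hX⟩ := ih hr
    exact ⟨o', hS, fun X h => .node hl (hX X h) hδ⟩

end Run

def slice (L : Set (BTree α)) (n : ℕ) : Set (BTree α) := {T ∈ L | T.size = n}

instance [Finite α] (L : Set (BTree α)) (n : ℕ) : Finite (slice L n) :=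
  ((finite_setOf_size_le n).subset fun _ hT => hT.2.le).to_subtype

def nodeSet (L : Set (BTree α)) : Set (BTree α) :=
  {T | ∃ a l r, l ∈ L ∧ r ∈ L ∧ T = node a l r}

lemma ncard_slice_nodeSet [Fintype α] (L : Set (BTree α)) (n : ℕ) :
    (slice (nodeSet L) (n + 1)).ncard = ∑ i ∈ Finset.range (n + 1),
      Fintype.card α * (slice L i).ncard * (slice L (n - i)).ncard := by
  let g : (Σ i : Fin (n + 1), α × slice L i × slice L (n - i)) → slice (nodeSet L) (n + 1) :=
    fun ⟨i, a, l, r⟩ => ⟨node a l r, ⟨a, l, r, l.2.1, r.2.1, rfl⟩, by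
      simp only [size, l.2.2, r.2.2]; omega⟩
  have hg : g.Bijective := by
    constructor
    · rintro ⟨⟨i, _⟩, a, ⟨l, _, hls⟩, r⟩ ⟨⟨j, _⟩, b, ⟨l', _, hls'⟩, r'⟩ h
      obtain ⟨rfl, rfl, hr⟩ := node.inj (congrArg Subtype.val h)
      obtain rfl : i = j := hls.symm.trans hls'
      obtain rfl : r = r' := Subtype.ext hr
      rfl
    · rintro ⟨T, ⟨a, l, r, hl, hr, rfl⟩, hT⟩
      simp only [size] at hT
      exact ⟨⟨⟨l.size, by omega⟩, a, ⟨l, hl, rfl⟩, ⟨r, hr, by dsimp only; omega⟩⟩, rfl⟩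
  rw [← Nat.card_coe_set_eq, ← Nat.card_eq_of_bijective g hg, Nat.card_sigma,
    ← Fin.sum_univ_eq_sum_range]
  simp only [Nat.card_prod, Nat.card_eq_fintype_card (α := α), Nat.card_coe_set_eq,
    mul_assoc]

lemma ncard_slice_univ [Fintype α] (n : ℕ) :
    (slice (Set.univ : Set (BTree α)) n).ncard = catalan n * Fintype.card α ^ n := by
  induction n using Nat.strong_induction_on with
  | _ n ih =>
    match n with
    | 0 =>
      have : slice (Set.univ : Set (BTree α)) 0 = {nil} := by
        ext T; simp [slice, size_eq_zero_iff]
      simp [this]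
    | m + 1 =>
      have hnode :
          slice (Set.univ : Set (BTree α)) (m + 1) = slice (nodeSet Set.univ) (m + 1) := by
        ext (_ | ⟨a, l, r⟩)
        · simp [slice, nodeSet, size]
        · simp [slice, nodeSet]
      rw [hnode, ncard_slice_nodeSet, catalan_succ, ← Fin.sum_univ_eq_sum_range, Finset.sum_mul,
        pow_succ]
      refine Finset.sum_congr rfl fun i _ => ?_
      rw [ih i (by omega), ih (m - i) (by omega), ← pow_mul_pow_sub _ (Nat.lt_succ_iff.1 i.2)]
      ring

lemma catalan_pos (n : ℕ) : 0 < catalan n :=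
  Nat.pos_of_mul_pos_left ((succ_mul_catalan_eq_centralBinom n).symm ▸ n.centralBinom_pos)

lemma catalan_succ_le (n : ℕ) : catalan (n + 1) ≤ 4 * catalan n := by
  have h := Nat.succ_mul_centralBinom_succ n
  rw [← succ_mul_catalan_eq_centralBinom, ← succ_mul_catalan_eq_centralBinom] at h
  have : (n + 2) * catalan (n + 1) = 2 * (2 * n + 1) * catalan n :=
    Nat.eq_of_mul_eq_mul_left (by omega : 0 < n + 1) (by rw [h]; ring)
  nlinarith

lemma catalan_add_le (n m : ℕ) : catalan (n + m) ≤ 4 ^ m * catalan n := by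
  induction m with
  | zero => simp
  | succ m ih =>
    calc catalan (n + m + 1) ≤ 4 * catalan (n + m) := catalan_succ_le _
      _ ≤ 4 * (4 ^ m * catalan n) := by omega
      _ = 4 ^ (m + 1) * catalan n := by ring

section Density

variable [Fintype α]

lemma density_eq (L : Set (BTree α)) (n : ℕ) :
    density L n = (slice L n).ncard / ((catalan n : ℝ) * Fintype.card α ^ n) := by
  rw [density, ← Nat.card_coe_set_eq]
  rfl

lemma density_nonneg (L : Set (BTree α)) (n : ℕ) : 0 ≤ density L n := by
  rw [density_eq]
  positivity

lemma catalan_mul_pow_card_pos [Nonempty α] (n : ℕ) :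
    0 < (catalan n : ℝ) * Fintype.card α ^ n := by
  have := catalan_pos n
  have := Fintype.card_pos (α := α)
  positivity

lemma density_le_density {L M : Set (BTree α)} {n : ℕ} (h : slice L n ⊆ slice M n) :
    density L n ≤ density M n := by
  rw [density_eq, density_eq]
  exact div_le_div_of_nonneg_right (by exact_mod_cast Set.ncard_le_ncard h) (by positivity)

lemma density_lt_density [Nonempty α] {L M : Set (BTree α)} {n : ℕ}
    (h : slice L n ⊂ slice M n) :
    density L n < density M n := by
  rw [density_eq, density_eq]
  gcongr
  · exact catalan_mul_pow_card_pos n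
  · exact Set.ncard_lt_ncard h

lemma density_univ [Nonempty α] (n : ℕ) : density (Set.univ : Set (BTree α)) n = 1 := by
  rw [density_eq, ncard_slice_univ]
  push_cast
  exact div_self (catalan_mul_pow_card_pos n).ne'

lemma density_le_one [Nonempty α] (L : Set (BTree α)) (n : ℕ) : density L n ≤ 1 :=
  (density_le_density fun _ hT => ⟨trivial, hT.2⟩).trans_eq (density_univ n)

lemma density_iUnion_le {ι : Type*} [Fintype ι] (L : ι → Set (BTree α)) (n : ℕ) :
    density (⋃ i, L i) n ≤ ∑ i, density (L i) n := by
  have : slice (⋃ i, L i) n = ⋃ i, slice (L i) n := by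
    ext T
    simp [slice]
  simp only [density_eq, ← Finset.sum_div, this]
  gcongr
  exact_mod_cast Set.ncard_iUnion_le_of_fintype _

lemma catalan_mul_density_nodeSet [Nonempty α] (L : Set (BTree α)) (m : ℕ) :
    catalan (m + 1) * density (nodeSet L) (m + 1) = ∑ i ∈ Finset.range (m + 1),
      (catalan i * catalan (m - i) : ℝ) * (density L i * density L (m - i)) := by
  rw [density_eq, ncard_slice_nodeSet]
  push_cast
  rw [Finset.sum_div, Finset.mul_sum]
  refine Finset.sum_congr rfl fun i hi => ?_
  have hi : i ≤ m := Nat.lt_succ_iff.1 (Finset.mem_range.1 hi)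
  have hC : ∀ k, (catalan k : ℝ) ≠ 0 := fun k => by exact_mod_cast (catalan_pos k).ne'
  rw [density_eq, density_eq, pow_succ, ← pow_mul_pow_sub (Fintype.card α : ℝ) hi]
  field_simp [hC i, hC (m - i), hC (m + 1)]

lemma density_le_of_ncard_le [Nonempty α] {L M : Set (BTree α)} {n m : ℕ}
    (h : (slice M n).ncard ≤ (slice L (n + m)).ncard) :
    density M n ≤ (4 * Fintype.card α) ^ m * density L (n + m) := by
  have hcat : (catalan (n + m) : ℝ) ≤ 4 ^ m * catalan n := by exact_mod_cast catalan_add_le n m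
  rw [density_eq, density_eq, mul_div_assoc', div_le_div_iff₀ (catalan_mul_pow_card_pos n)
    (catalan_mul_pow_card_pos (n + m))]
  calc ((slice M n).ncard : ℝ) * (catalan (n + m) * Fintype.card α ^ (n + m))
      ≤ (slice L (n + m)).ncard * (4 ^ m * catalan n * Fintype.card α ^ (n + m)) := by
        gcongr
    _ = _ := by ring

end Density

namespace HasDensity

variable [Fintype α] {L M : Set (BTree α)}

lemma mono (hM : HasDensity M 0) (h : L ⊆ M) : HasDensity L 0 :=
  tendsto_of_tendsto_of_tendsto_of_le_of_le tendsto_const_nhds hM (density_nonneg L)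
    fun _ => density_le_density fun _ hT => ⟨h hT.1, hT.2⟩

lemma iUnion {ι : Type*} [Finite ι] {L : ι → Set (BTree α)} (h : ∀ i, HasDensity (L i) 0) :
    HasDensity (⋃ i, L i) 0 := by
  cases nonempty_fintype ι
  have hsum : Tendsto (fun n => ∑ i, density (L i) n) atTop (𝓝 0) := by
    simpa using tendsto_finsetSum Finset.univ fun i _ => h i
  exact tendsto_of_tendsto_of_tendsto_of_le_of_le tendsto_const_nhds hsum
    (density_nonneg _) (density_iUnion_le L)

lemma of_plug_mem [Nonempty α] (hL : HasDensity L 0) (c : Context α)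
    (h : ∀ X ∈ M, c.plug X ∈ L) : HasDensity M 0 := by
  have hle : ∀ n, density M n ≤ (4 * Fintype.card α) ^ c.size * density L (n + c.size) :=
    fun n => density_le_of_ncard_le <| Set.ncard_le_ncard_of_injOn c.plug
      (fun X hX => ⟨h X hX.1, by rw [Context.size_plug, hX.2]⟩) c.plug_injective.injOn
  have hlim : Tendsto (fun n => (4 * Fintype.card α : ℝ) ^ c.size * density L (n + c.size))
      atTop (𝓝 0) := by
    simpa using (Tendsto.comp hL (tendsto_add_atTop_nat c.size)).const_mul _
  exact tendsto_of_tendsto_of_tendsto_of_le_of_le tendsto_const_nhds hlim (density_nonneg M) hle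

lemma exists_ne_nil_notMem [Nonempty α] (hL : HasDensity L 0) : ∃ T ≠ BTree.nil, T ∉ L := by
  by_contra! hall
  obtain ⟨n, hn, hpos⟩ :=
    ((Tendsto.eventually hL (gt_mem_nhds one_pos)).and (eventually_ge_atTop 1)).exists
  have : density Set.univ n ≤ density L n := density_le_density fun T hT =>
    ⟨hall T fun h => by have := h ▸ hT.2; simp only [BTree.size] at this; omega, hT.2⟩
  rw [density_univ] at this
  linarith

end HasDensity

lemma le_mul_of_catalan_conv_le {b : ℕ → ℝ} {k N m : ℕ} {θ : ℝ}
    (hb0 : ∀ n, 0 ≤ b n) (hb1 : ∀ n, b n ≤ 1)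
    (hrec : ∀ m, catalan (m + 1) * b (m + 1) ≤
      ∑ i ∈ Finset.range (m + 1), (catalan i * catalan (m - i) : ℝ) * (b i * b (m - i)))
    (hθ : ∀ n, N ≤ n → b n ≤ θ) (hm : 2 * N + k ≤ m) :
    b (m + 1) ≤ θ * (1 - (1 - b k) / 4 ^ (k + 1)) := by
  have hθ0 : 0 ≤ θ := (hb0 N).trans (hθ N le_rfl)
  set w : ℕ → ℝ := fun i => catalan i * catalan (m - i)
  have hw0 : ∀ i, 0 ≤ w i := fun i => by positivity
  have hterm : ∀ i ∈ Finset.range (m + 1),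
      w i * (b i * b (m - i)) ≤ w i * θ - if i = k then w k * θ * (1 - b k) else 0 := by
    intro i hi
    split_ifs with hik
    · subst hik
      have := mul_le_mul_of_nonneg_left (hθ (m - i) (by omega)) (mul_nonneg (hw0 i) (hb0 i))
      linarith
    · have : b i * b (m - i) ≤ θ := by
        rcases le_or_gt N i with hNi | hiN
        · simpa using mul_le_mul (hθ i hNi) (hb1 _) (hb0 _) hθ0
        · simpa using mul_le_mul (hb1 i) (hθ _ (by omega)) (hb0 _) zero_le_one
      simpa using mul_le_mul_of_nonneg_left this (hw0 i)
  have hsum : ∑ i ∈ Finset.range (m + 1), w i = catalan (m + 1) := by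
    rw [catalan_succ, ← Fin.sum_univ_eq_sum_range]
    push_cast
    rfl
  have hk : (catalan (m + 1) : ℝ) ≤ 4 ^ (k + 1) * w k := by
    have h := catalan_add_le (m - k) (k + 1)
    rw [show m - k + (k + 1) = m + 1 by omega] at h
    have : (catalan (m - k) : ℝ) ≤ w k := le_mul_of_one_le_left (by positivity)
      (by exact_mod_cast catalan_pos k)
    calc (catalan (m + 1) : ℝ) ≤ 4 ^ (k + 1) * catalan (m - k) := by exact_mod_cast h
      _ ≤ 4 ^ (k + 1) * w k := by gcongr
  have hC : (0 : ℝ) < catalan (m + 1) := by exact_mod_cast catalan_pos (m + 1)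
  have hθk : 0 ≤ θ * (1 - b k) := mul_nonneg hθ0 (by linarith [hb1 k])
  refine le_of_mul_le_mul_left ?_ hC
  calc (catalan (m + 1) : ℝ) * b (m + 1)
      ≤ catalan (m + 1) * θ - w k * (θ * (1 - b k)) := by
        have := Finset.sum_le_sum hterm
        rw [Finset.sum_sub_distrib, Finset.sum_ite_eq',
          if_pos (Finset.mem_range.2 (by omega)), ← Finset.sum_mul, hsum] at this
        linarith [hrec m]
    _ ≤ catalan (m + 1) * θ - catalan (m + 1) / 4 ^ (k + 1) * (θ * (1 - b k)) := by
        gcongr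
        rwa [div_le_iff₀' (by positivity)]
    _ = catalan (m + 1) * (θ * (1 - (1 - b k) / 4 ^ (k + 1))) := by ring

lemma tendsto_zero_of_catalan_conv_le {b : ℕ → ℝ} {k : ℕ}
    (hb0 : ∀ n, 0 ≤ b n) (hb1 : ∀ n, b n ≤ 1) (hk : b k < 1)
    (hrec : ∀ m, catalan (m + 1) * b (m + 1) ≤
      ∑ i ∈ Finset.range (m + 1), (catalan i * catalan (m - i) : ℝ) * (b i * b (m - i))) :
    Tendsto b atTop (𝓝 0) := by
  set θ := 1 - (1 - b k) / 4 ^ (k + 1)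
  have hθ0 : 0 ≤ θ := by
    have : (1 - b k) / 4 ^ (k + 1) ≤ 1 :=
      div_le_one_of_le₀ ((sub_le_self _ (hb0 k)).trans (one_le_pow₀ (by norm_num)))
        (by positivity)
    linarith
  have hθ1 : θ < 1 := by
    have : 0 < (1 - b k) / 4 ^ (k + 1) := div_pos (by linarith) (by positivity)
    linarith
  have hpow : ∀ t, ∃ N, ∀ n, N ≤ n → b n ≤ θ ^ t := by
    intro t
    induction t with
    | zero => exact ⟨0, fun n _ => by simpa using hb1 n⟩
    | succ t ih =>
      obtain ⟨N, hN⟩ := ih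
      refine ⟨2 * N + k + 1, fun n hn => ?_⟩
      obtain ⟨m, rfl⟩ : ∃ m, n = m + 1 := ⟨n - 1, by omega⟩
      rw [pow_succ]
      exact le_mul_of_catalan_conv_le hb0 hb1 hrec hN (by omega)
  refine tendsto_order.2 ⟨fun a ha => .of_forall fun n => ha.trans_le (hb0 n), fun a ha => ?_⟩
  obtain ⟨t, ht⟩ := ((tendsto_pow_atTop_nhds_zero_of_lt_one hθ0 hθ1).eventually
    (gt_mem_nhds ha)).exists
  obtain ⟨N, hN⟩ := hpow t
  exact eventually_atTop.2 ⟨N, fun n hn => (hN n hn).trans_lt ht⟩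

theorem hasDensity_avoiding [Fintype α] [Nonempty α] (S : BTree α) :
    HasDensity {T | ¬Subtree S T} 0 := by
  refine tendsto_zero_of_catalan_conv_le (k := S.size) (density_nonneg _) (density_le_one _) ?_
    fun m => ?_
  · rw [← density_univ (α := α) S.size]
    refine density_lt_density ⟨fun T hT => ⟨trivial, hT.2⟩, fun h => ?_⟩
    exact (h ⟨trivial, rfl⟩).1 (.refl S)
  · rw [← catalan_mul_density_nodeSet]
    gcongr
    refine density_le_density ?_
    rintro (_ | ⟨a, l, r⟩) ⟨hT, hsize⟩
    · simp [BTree.size] at hsize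
    · exact ⟨⟨a, l, r, fun h => hT h.left, fun h => hT h.right, rfl⟩, hsize⟩

theorem exists_forbidden_subtree_of_hasDensity_zero [Fintype α] [Nonempty α] {Q : Type*}
    [Finite Q] (Δ : Option Q → Option Q → α → Q → Prop) (F : Set Q)
    (h : HasDensity {T | TAccepts Δ F T} 0) :
    ∃ S : BTree α, ∀ T, Subtree S T → ¬TAccepts Δ F T := by
  by_contra! hno
  let Good := {q : Q // ∃ c : Context α, ∀ X, Run Δ X (some q) → TAccepts Δ F (c.plug X)}
  have hcover : ∀ T ≠ BTree.nil, ∃ q : Good, Run Δ T (some q.1) := by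
    intro T hT
    obtain ⟨W, hTW, p, hp, hW⟩ := hno T
    obtain ⟨c, rfl⟩ := hTW.exists_plug_eq
    obtain ⟨o, hTo, hc⟩ := hW.of_plug
    obtain ⟨q, rfl⟩ := hTo.exists_eq_some hT
    exact ⟨⟨q, c, fun X hX => ⟨p, hp, hc X hX⟩⟩, hTo⟩
  have hsparse : HasDensity (⋃ q : Good, {X | Run Δ X (some q.1)}) 0 :=
    HasDensity.iUnion fun ⟨_, c, hc⟩ => h.of_plug_mem c hc
  obtain ⟨T, hT, hTnot⟩ := hsparse.exists_ne_nil_notMem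
  obtain ⟨q, hq⟩ := hcover T hT
  exact hTnot (Set.mem_iUnion.2 ⟨q, hq⟩)

/-- A regular tree language has asymptotic density 0 iff some tree `S` is a
forbidden subtree, i.e. `{T : S ⪯ T} ⊆ ℬ^Σ \ L`. -/
theorem sparse_regular_tree_iff_forbidden_subtree {α : Type*} [Fintype α] [Nonempty α]
    (L : Set (BTree α)) (hL : RegularTreeLang L) :
    HasDensity L 0 ↔ ∃ S : BTree α, {T : BTree α | BTree.Subtree S T} ⊆ Lᶜ := by
  constructor
  · obtain ⟨Q, _, Δ, F, rfl⟩ := hL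
    exact exists_forbidden_subtree_of_hasDensity_zero Δ F
  · rintro ⟨S, hS⟩
    exact (hasDensity_avoiding S).mono fun T hT hST => hS hST hT

end Sparse
end

section
/- Let A = (Σ,Q,q₀,δ,F) be a deterministic finite automaton over a finite nonempty alphabet Σ in which every state is reachable from the initial state q₀. Then the language L(A) accepted by A is infix complete if and only if some closed reachability class of A contains an accepting state. -/
/-!
Call a state recurrent if every state reachable from it can reach it back; these are exactly the
states of closed reachability classes. If an accepting state `p` lies in a closed class, then for
any `w` we reach `p`, read `w` without leaving the class, and return to `p`. Conversely, in a
finite automaton every state reaches a recurrent one, and recurrence is preserved by reading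
further letters; treating the states one at a time yields a single word `w` leading every state
to a recurrent state. A word `x w y` in the language then ends in an accepting state of the
closed class of `δ̂(q₀, x w)`.
-/

open Filter Topology MeasureTheory

namespace Sparse

variable {α : Type*}

/-- The finite word `w` is a prefix of the ω-word `ζ`. -/
def PrefixO (w : List α) (ζ : ℕ → α) : Prop :=
  ∀ i : Fin w.length, ζ i = w.get i

/-- Concatenation `w · ζ` of a finite word with an ω-word. -/
def appendO (w : List α) (ζ : ℕ → α) : ℕ → α :=
  fun n => if h : n < w.length then w.get ⟨n, h⟩ else ζ (n - w.length)

/-- The concatenation `v 0 · v 1 · ⋯ · v (k-1)` of the first `k` words of a sequence of words. -/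
def joinUpTo (v : ℕ → List α) (k : ℕ) : List α :=
  (List.ofFn (fun i : Fin k => v i)).flatten

/-- `V^ω`: the set of ω-words of the form `v₁ · v₂ · v₃ ⋯` with all `vᵢ ∈ V`.  An ω-word `ζ` is
such an infinite concatenation iff each finite concatenation `v₁ ⋯ v_k` is a prefix of `ζ` and
the lengths of these finite concatenations tend to infinity. -/
def omegaPow (V : Set (List α)) : Set (ℕ → α) :=
  {ζ | ∃ v : ℕ → List α, (∀ i, v i ∈ V) ∧
    Tendsto (fun k => (joinUpTo v k).length) atTop atTop ∧
    ∀ k, PrefixO (joinUpTo v k) ζ}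

/-- `U · V^ω = {u · v₁ · v₂ ⋯ : u ∈ U, v₁, v₂, … ∈ V}`. -/
def catOmega (U V : Set (List α)) : Set (ℕ → α) :=
  {ζ | ∃ u ∈ U, ∃ ξ ∈ omegaPow V, ζ = appendO u ξ}

/-- An ω-word `ξ` is rich if every finite word `v` occurs as a factor of `ξ`,
i.e. `ξ = x · v · y` for some finite word `x` and ω-word `y`. -/
def Rich (ξ : ℕ → α) : Prop :=
  ∀ v : List α, ∃ (x : List α) (y : ℕ → α), ξ = appendO (x ++ v) y

/-- `V* `: the set of finite concatenations of words from `V`. -/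
def star (V : Set (List α)) : Set (List α) :=
  {w | ∃ l : List (List α), (∀ v ∈ l, v ∈ V) ∧ w = l.flatten}

/-- A language of finite words is regular iff it is accepted by a DFA. -/
def RegularLang (L : Set (List α)) : Prop :=
  ∃ (σ : Type) (_ : Fintype σ) (M : DFA α σ), L = M.accepts

/-- `L` is infix complete if every finite word occurs as an infix of a word of `L`. -/
def InfixComplete (L : Set (List α)) : Prop :=
  ∀ w : List α, ∃ x y : List α, x ++ w ++ y ∈ L

/-- `q'` is reachable from `q` in the DFA `M`. -/
def DFAReach {σ : Type*} (M : DFA α σ) (q q' : σ) : Prop :=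
  ∃ w : List α, M.evalFrom q w = q'

/-- The reachability class of the state `q`: all states `q'` with `q ⇝ q'` and `q' ⇝ q`. -/
def ReachClass {σ : Type*} (M : DFA α σ) (q : σ) : Set σ :=
  {q' | DFAReach M q q' ∧ DFAReach M q' q}

section DFAReachability

variable {σ : Type*} {M : DFA α σ}

theorem DFAReach.refl (M : DFA α σ) (q : σ) : DFAReach M q q := ⟨[], rfl⟩

theorem DFAReach.trans {q r s : σ} (h₁ : DFAReach M q r) (h₂ : DFAReach M r s) :
    DFAReach M q s := by
  obtain ⟨u, rfl⟩ := h₁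
  obtain ⟨v, rfl⟩ := h₂
  exact ⟨u ++ v, DFA.evalFrom_of_append M q u v⟩

theorem dfaReach_evalFrom (M : DFA α σ) (q : σ) (w : List α) : DFAReach M q (M.evalFrom q w) :=
  ⟨w, rfl⟩

theorem mem_accepts_append_append {x w y : List α} :
    x ++ w ++ y ∈ M.accepts ↔ M.evalFrom (M.evalFrom (M.eval x) w) y ∈ M.accept := by
  simp only [DFA.mem_accepts, DFA.eval, DFA.evalFrom_of_append]

theorem evalFrom_mem_reachClass {q : σ}
    (hcl : ∀ p ∈ ReachClass M q, ∀ a : α, M.step p a ∈ ReachClass M q)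
    {p : σ} (hp : p ∈ ReachClass M q) (w : List α) : M.evalFrom p w ∈ ReachClass M q := by
  induction w generalizing p with
  | nil => exact hp
  | cons a w ih => exact ih (hcl p hp a)

def IsRecurrent (M : DFA α σ) (r : σ) : Prop :=
  ∀ s, DFAReach M r s → DFAReach M s r

theorem IsRecurrent.of_reach {r s : σ} (hr : IsRecurrent M r) (hrs : DFAReach M r s) :
    IsRecurrent M s :=
  fun t hst => (hr t (hrs.trans hst)).trans hrs

theorem IsRecurrent.mem_reachClass {r s : σ} (hr : IsRecurrent M r) (hrs : DFAReach M r s) :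
    s ∈ ReachClass M r :=
  ⟨hrs, hr s hrs⟩

theorem IsRecurrent.step_mem_reachClass {r : σ} (hr : IsRecurrent M r) :
    ∀ p ∈ ReachClass M r, ∀ a : α, M.step p a ∈ ReachClass M r :=
  fun _ hp a => hr.mem_reachClass (hp.1.trans ⟨[a], rfl⟩)

section Finite

variable [Finite σ]

theorem exists_isRecurrent_of_reach (M : DFA α σ) (q : σ) :
    ∃ r, DFAReach M q r ∧ IsRecurrent M r := by
  -- a state reachable from `q` whose set of successors is minimal for inclusion
  obtain ⟨r, hqr, hmin⟩ := Set.Finite.exists_minimalFor (fun s => {t | DFAReach M s t})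
    {s | DFAReach M q s} (Set.toFinite _) ⟨q, .refl M q⟩
  refine ⟨r, hqr, fun s hrs => ?_⟩
  have hsucc : {t | DFAReach M s t} ⊆ {t | DFAReach M r t} := fun t hst => hrs.trans hst
  exact hmin (hqr.trans hrs) hsucc (DFAReach.refl M r)

theorem exists_word_forall_mem_isRecurrent_evalFrom (M : DFA α σ) (l : List σ) :
    ∃ w, ∀ q ∈ l, IsRecurrent M (M.evalFrom q w) := by
  induction l with
  | nil => exact ⟨[], by simp⟩
  | cons q l ih =>
    obtain ⟨w, hw⟩ := ih
    obtain ⟨_, ⟨u, rfl⟩, hr⟩ := exists_isRecurrent_of_reach M (M.evalFrom q w)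
    refine ⟨w ++ u, ?_⟩
    simp only [List.mem_cons, forall_eq_or_imp, DFA.evalFrom_of_append]
    exact ⟨hr, fun p hp => (hw p hp).of_reach (dfaReach_evalFrom M _ u)⟩

theorem exists_word_forall_isRecurrent_evalFrom (M : DFA α σ) :
    ∃ w, ∀ q, IsRecurrent M (M.evalFrom q w) := by
  obtain ⟨l, -, hl⟩ := Finite.exists_univ_list σ
  obtain ⟨w, hw⟩ := exists_word_forall_mem_isRecurrent_evalFrom M l
  exact ⟨w, fun q => hw q (hl q)⟩

theorem exists_closed_reachClass_accepting_of_infixComplete (h : InfixComplete M.accepts) :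
    ∃ q : σ, (∀ p ∈ ReachClass M q, ∀ a : α, M.step p a ∈ ReachClass M q) ∧
      ∃ p ∈ ReachClass M q, p ∈ M.accept := by
  obtain ⟨w, hw⟩ := exists_word_forall_isRecurrent_evalFrom M
  obtain ⟨x, y, hxwy⟩ := h w
  have hr := hw (M.eval x)
  exact ⟨_, hr.step_mem_reachClass, _, hr.mem_reachClass (dfaReach_evalFrom M _ y),
    mem_accepts_append_append.1 hxwy⟩

end Finite

theorem infixComplete_of_closed_reachClass_accepting (hreach : ∀ q : σ, DFAReach M M.start q)
    {q : σ} (hcl : ∀ p ∈ ReachClass M q, ∀ a : α, M.step p a ∈ ReachClass M q)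
    {p : σ} (hp : p ∈ ReachClass M q) (hacc : p ∈ M.accept) : InfixComplete M.accepts := by
  intro w
  obtain ⟨x, hx⟩ := hreach p
  obtain ⟨y, hy⟩ : DFAReach M (M.evalFrom p w) p :=
    (evalFrom_mem_reachClass hcl hp w).2.trans hp.1
  refine ⟨x, y, mem_accepts_append_append.2 ?_⟩
  rwa [DFA.eval, hx, hy]

end DFAReachability

theorem infixComplete_iff_closed_class_accepting_general {α : Type*} {σ : Type*}
    [Fintype σ] (M : DFA α σ)
    (hreach : ∀ q : σ, DFAReach M M.start q) :
    InfixComplete M.accepts ↔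
      ∃ q : σ, (∀ p ∈ ReachClass M q, ∀ a : α, M.step p a ∈ ReachClass M q) ∧
        ∃ p ∈ ReachClass M q, p ∈ M.accept :=
  ⟨exists_closed_reachClass_accepting_of_infixComplete,
    fun ⟨_, hcl, _, hp, hacc⟩ => infixComplete_of_closed_reachClass_accepting hreach hcl hp hacc⟩

/-- For a DFA in which every state is reachable, `L(A)` is infix complete iff
some closed reachability class contains an accepting state. -/
theorem infixComplete_iff_closed_class_accepting {α : Type*} {σ : Type*}
    [Fintype α] [Nonempty α] [Fintype σ] (M : DFA α σ)
    (hreach : ∀ q : σ, DFAReach M M.start q) :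
    InfixComplete M.accepts ↔
      ∃ q : σ, (∀ p ∈ ReachClass M q, ∀ a : α, M.step p a ∈ ReachClass M q) ∧
        ∃ p ∈ ReachClass M q, p ∈ M.accept :=
  infixComplete_iff_closed_class_accepting_general M hreach

end Sparse
end

section
/- Let A = (Σ,Q,q₀,δ,F) be a deterministic finite automaton over a finite nonempty alphabet Σ in which every state is reachable from q₀, and suppose L(A) is infix complete. Then there exist a word x ∈ Σ* and a natural number k such that for every v ∈ Σ* there is a word y ∈ Σ* with |y| ≤ k and x·v·y ∈ L(A). -/
/-! If no state `q` stayed coaccessible after every word, the finitely many states could be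
killed one after another by a single word `w`, and then no `x ++ w ++ y` would be accepted.
Reaching such a state `q` by `x`, every `x ++ v` can still be completed, and cutting loops out
of the completion makes it at most `|Q|` long. -/

open Filter Topology MeasureTheory

namespace Sparse

variable {α : Type*}

section Coaccessible

variable {σ : Type*} (M : DFA α σ)

def _root_.DFA.IsCoaccessible (p : σ) : Prop :=
  ∃ y : List α, M.evalFrom p y ∈ M.accept

variable {M}

theorem _root_.DFA.IsCoaccessible.of_evalFrom {p : σ} {v : List α}
    (h : M.IsCoaccessible (M.evalFrom p v)) : M.IsCoaccessible p := by
  obtain ⟨y, hy⟩ := h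
  exact ⟨v ++ y, by rwa [DFA.evalFrom_of_append]⟩

/-- Cutting out the loops found by `DFA.evalFrom_split` shortens an accepting run. -/
theorem _root_.DFA.exists_length_le_card_of_evalFrom_mem_accept [Fintype σ] {p : σ} {y : List α}
    (hy : M.evalFrom p y ∈ M.accept) :
    ∃ z : List α, z.length ≤ Fintype.card σ ∧ M.evalFrom p z ∈ M.accept := by
  induction hn : y.length using Nat.strong_induction_on generalizing y with
  | _ n ih =>
    by_cases hlen : n ≤ Fintype.card σ
    · exact ⟨y, hn ▸ hlen, hy⟩
    obtain ⟨q, a, b, c, rfl, -, hb, ha, -, hc⟩ :=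
      M.evalFrom_split (s := p) (hn ▸ Nat.le_of_not_le hlen) rfl
    have hb_pos : 0 < b.length := List.length_pos_iff.mpr hb
    refine ih (a ++ c).length ?_ ?_ rfl
    · simp only [List.length_append] at hn ⊢
      omega
    · rwa [DFA.evalFrom_of_append, ha, hc]

/-- Killing the states one after another: once a state is not coaccessible, it stays so. -/
theorem _root_.DFA.exists_forall_not_isCoaccessible [Fintype σ]
    (h : ∀ q : σ, ∃ v : List α, ¬M.IsCoaccessible (M.evalFrom q v)) :
    ∃ w : List α, ∀ q : σ, ¬M.IsCoaccessible (M.evalFrom q w) := by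
  classical
  suffices ∀ s : Finset σ, ∃ w : List α, ∀ q ∈ s, ¬M.IsCoaccessible (M.evalFrom q w) by
    simpa using this Finset.univ
  intro s
  induction s using Finset.induction_on with
  | empty => exact ⟨[], by simp⟩
  | insert q s _ ih =>
    obtain ⟨w, hw⟩ := ih
    obtain ⟨v, hv⟩ := h (M.evalFrom q w)
    refine ⟨w ++ v, fun q' hq' => ?_⟩
    rw [DFA.evalFrom_of_append]
    rcases Finset.mem_insert.mp hq' with rfl | hq'
    · exact hv
    · exact fun hc => hw q' hq' hc.of_evalFrom

theorem exists_forall_isCoaccessible_evalFrom_of_infixComplete [Fintype σ]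
    (hic : InfixComplete M.accepts) :
    ∃ q : σ, ∀ v : List α, M.IsCoaccessible (M.evalFrom q v) := by
  by_contra! h
  obtain ⟨w, hw⟩ := DFA.exists_forall_not_isCoaccessible h
  obtain ⟨x, y, hxy⟩ := hic w
  change M.evalFrom M.start (x ++ w ++ y) ∈ M.accept at hxy
  rw [DFA.evalFrom_of_append, DFA.evalFrom_of_append] at hxy
  exact hw _ ⟨y, hxy⟩

end Coaccessible

theorem uniform_completion_of_infixComplete_general {α : Type*} {σ : Type*}
    [Fintype σ] (M : DFA α σ)
    (hreach : ∀ q : σ, ∃ w : List α, M.evalFrom M.start w = q)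
    (hic : InfixComplete M.accepts) :
    ∃ (x : List α) (k : ℕ), ∀ v : List α,
      ∃ y : List α, y.length ≤ k ∧ x ++ v ++ y ∈ M.accepts := by
  obtain ⟨q, hq⟩ := exists_forall_isCoaccessible_evalFrom_of_infixComplete hic
  obtain ⟨x, rfl⟩ := hreach q
  refine ⟨x, Fintype.card σ, fun v => ?_⟩
  obtain ⟨y, hy⟩ := hq v
  obtain ⟨z, hz, hacc⟩ := DFA.exists_length_le_card_of_evalFrom_mem_accept hy
  refine ⟨z, hz, show M.evalFrom M.start (x ++ v ++ z) ∈ M.accept from ?_⟩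
  rwa [DFA.evalFrom_of_append, DFA.evalFrom_of_append]

/-- If every state of the DFA `M` is reachable and `L(A)` is infix complete, then
there are a word `x` and a bound `k` such that every `v` can be completed to `x·v·y ∈ L(A)`
with `|y| ≤ k`. -/
theorem uniform_completion_of_infixComplete {α : Type*} {σ : Type*}
    [Fintype α] [Nonempty α] [Fintype σ] (M : DFA α σ)
    (hreach : ∀ q : σ, ∃ w : List α, M.evalFrom M.start w = q)
    (hic : InfixComplete M.accepts) :
    ∃ (x : List α) (k : ℕ), ∀ v : List α,
      ∃ y : List α, y.length ≤ k ∧ x ++ v ++ y ∈ M.accepts :=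
  uniform_completion_of_infixComplete_general M hreach hic

end Sparse
end

section
/- Let Σ be a finite nonempty alphabet and V ⊆ Σ*. Then V^ω contains a rich ω-word if and only if V* is infix complete. -/
/-! If `ξ = v₀v₁⋯ ∈ V^ω` is rich, every word `w` occurs in `ξ`, hence inside one of the prefixes
`v₀⋯v_k ∈ V*` of `ξ`. Conversely, enumerate all words
`w₀, w₁, …` and pick, for each `n`, words of `V` whose concatenation contains `wₙ`; laying these
blocks end to end gives a word of `V^ω` in which every `wₙ` occurs. -/

open Filter Topology MeasureTheory

namespace Sparse

variable {α : Type*}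

theorem prefixO_iff_ofFn {p : List α} {ζ : ℕ → α} :
    PrefixO p ζ ↔ List.ofFn (fun i : Fin p.length => ζ i) = p := by
  simp [List.ext_getElem_iff, PrefixO, Fin.forall_iff]

theorem PrefixO.mono {p q : List α} {ζ : ℕ → α} (hq : PrefixO q ζ) (h : p <+: q) :
    PrefixO p ζ := fun i => by
  simpa [h.getElem i.isLt] using hq ⟨i, lt_of_lt_of_le i.isLt h.length_le⟩

theorem PrefixO.isPrefix_of_length_le {p q : List α} {ζ : ℕ → α} (hp : PrefixO p ζ)
    (hq : PrefixO q ζ) (hle : p.length ≤ q.length) : p <+: q := by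
  rw [List.prefix_iff_eq_take]
  refine List.ext_getElem (by simp [hle]) fun i h₁ h₂ => ?_
  have hp := hp ⟨i, h₁⟩
  have hq := hq ⟨i, lt_of_lt_of_le h₁ hle⟩
  simp only [List.get_eq_getElem] at hp hq
  rw [List.getElem_take, ← hp, hq]

theorem prefixO_appendO (p : List α) (y : ℕ → α) : PrefixO p (appendO p y) := fun i => by
  simp [appendO]

theorem appendO_append (p q : List α) (y : ℕ → α) :
    appendO (p ++ q) y = appendO p (appendO q y) := by
  funext n
  simp only [appendO, List.length_append, List.get_eq_getElem]
  by_cases h₁ : n < p.length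
  · rw [dif_pos (by omega), dif_pos h₁, List.getElem_append_left h₁]
  by_cases h₂ : n < p.length + q.length
  · rw [dif_pos h₂, dif_neg h₁, dif_pos (by omega), List.getElem_append_right (by omega)]
  · rw [dif_neg h₂, dif_neg h₁, dif_neg (by omega), Nat.sub_add_eq]

theorem PrefixO.apply_mem {p : List α} {ζ : ℕ → α} (h : PrefixO p ζ) {i : ℕ}
    (hi : i < p.length) : ζ i ∈ p := by
  simp [h ⟨i, hi⟩]

theorem PrefixO.eq_appendO {p : List α} {ζ : ℕ → α} (h : PrefixO p ζ) :
    ζ = appendO p (fun m => ζ (m + p.length)) := by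
  funext n
  simp only [appendO]
  split
  · exact h ⟨n, by assumption⟩
  · congr 1
    omega

theorem exists_forall_prefixO {L : ℕ → List α} (hchain : ∀ ⦃m n⦄, m ≤ n → L m <+: L n)
    (hlen : Tendsto (fun n => (L n).length) atTop atTop) : ∃ ζ : ℕ → α, ∀ n, PrefixO (L n) ζ := by
  choose N hN using fun i => (hlen.eventually_gt_atTop i).exists
  refine ⟨fun i => (L (N i))[i]'(hN i), fun n i => ?_⟩
  rcases le_total (N i) n with h | h
  · exact (hchain h).getElem _
  · exact ((hchain h).getElem _).symm

theorem joinUpTo_succ (v : ℕ → List α) (k : ℕ) :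
    joinUpTo v (k + 1) = joinUpTo v k ++ v k := by
  rw [joinUpTo, joinUpTo, List.ofFn_succ', List.concat_eq_append, List.flatten_append]
  simp

theorem joinUpTo_isPrefix (v : ℕ → List α) {m n : ℕ} (h : m ≤ n) :
    joinUpTo v m <+: joinUpTo v n := by
  induction n, h using Nat.le_induction with
  | base => exact List.prefix_refl _
  | succ n _ ih => exact ih.trans (joinUpTo_succ v n ▸ List.prefix_append _ _)

theorem le_length_joinUpTo {v : ℕ → List α} (hv : ∀ i, v i ≠ []) (n : ℕ) :
    n ≤ (joinUpTo v n).length := by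
  induction n with
  | zero => simp
  | succ n ih =>
    have := List.length_pos_iff.mpr (hv n)
    rw [joinUpTo_succ, List.length_append]
    omega

theorem flatten_joinUpTo (v : ℕ → List (List α)) (n : ℕ) :
    (joinUpTo v n).flatten = joinUpTo (fun i => (v i).flatten) n := by
  simp [joinUpTo, List.flatten_flatten, List.map_ofFn, Function.comp_def]

theorem PrefixO.joinUpTo_length {p : List (List α)} {v : ℕ → List α} (h : PrefixO p v) :
    joinUpTo v p.length = p.flatten := by
  rw [joinUpTo, prefixO_iff_ofFn.mp h]

def IsFactor (w : List α) (ζ : ℕ → α) : Prop :=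
  ∃ (x : List α) (y : ℕ → α), ζ = appendO (x ++ w) y

theorem IsFactor.of_isInfix {w w' : List α} {ζ : ℕ → α} (h : IsFactor w ζ) (hw' : w' <:+: w) :
    IsFactor w' ζ := by
  obtain ⟨x, y, rfl⟩ := h
  obtain ⟨s, t, rfl⟩ := hw'
  exact ⟨x ++ s, appendO t y, by simp only [← appendO_append, List.append_assoc]⟩

theorem PrefixO.isFactor_of_isInfix {p w : List α} {ζ : ℕ → α} (hp : PrefixO p ζ)
    (hw : w <:+: p) : IsFactor w ζ :=
  IsFactor.of_isInfix ⟨[], _, hp.eq_appendO.trans (by rw [List.nil_append])⟩ hw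

variable {V : Set (List α)}

theorem joinUpTo_mem_star {v : ℕ → List α} (hv : ∀ i, v i ∈ V) (k : ℕ) :
    joinUpTo v k ∈ star V :=
  ⟨List.ofFn (fun i : Fin k => v i), by simp [List.mem_ofFn, hv], rfl⟩

theorem infixComplete_star_of_rich {ξ : ℕ → α} (hξ : ξ ∈ omegaPow V) (hrich : Rich ξ) :
    InfixComplete (star V) := by
  obtain ⟨v, hv, hlen, hpre⟩ := hξ
  intro w
  obtain ⟨x, y, hxy⟩ := hrich w
  obtain ⟨k, hk⟩ := (hlen.eventually_ge_atTop (x ++ w).length).exists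
  obtain ⟨z, hz⟩ := (hxy ▸ prefixO_appendO _ _ : PrefixO (x ++ w) ξ).isPrefix_of_length_le
    (hpre k) hk
  exact ⟨x, z, hz ▸ joinUpTo_mem_star hv k⟩

theorem tendsto_length_joinUpTo {v : ℕ → List α} (h : ∀ N, ∃ k, N ≤ (joinUpTo v k).length) :
    Tendsto (fun k => (joinUpTo v k).length) atTop atTop :=
  tendsto_atTop_atTop_of_monotone (fun _ _ hmn => (joinUpTo_isPrefix v hmn).length_le) h

theorem exists_mem_omegaPow_isFactor_flatten (l : ℕ → List (List α)) (hV : ∀ n, ∀ w ∈ l n, w ∈ V)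
    (hne : ∀ n, (l n).flatten ≠ []) :
    ∃ ζ ∈ omegaPow V, ∀ n, IsFactor (l n).flatten ζ := by
  have hl : ∀ n, l n ≠ [] := fun n h => hne n (h ▸ List.flatten_nil)
  have hlen_l := tendsto_atTop_mono (le_length_joinUpTo hl) tendsto_id
  -- `v` lists the words of the blocks `l 0, l 1, …` in order: the limit of the chain `joinUpTo l n`.
  obtain ⟨v, hv⟩ := exists_forall_prefixO (fun _ _ => joinUpTo_isPrefix l) hlen_l
  have hjoin : ∀ n, joinUpTo v (joinUpTo l n).length = joinUpTo (fun i => (l i).flatten) n :=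
    fun n => (hv n).joinUpTo_length.trans (flatten_joinUpTo l n)
  have hvV : ∀ i, v i ∈ V := by
    intro i
    obtain ⟨n, hn⟩ := (hlen_l.eventually_gt_atTop i).exists
    obtain ⟨_, hj, hvi⟩ := List.mem_flatten.mp ((hv n).apply_mem hn)
    obtain ⟨j, rfl⟩ := List.mem_ofFn.mp hj
    exact hV j _ hvi
  have hlen : Tendsto (fun k => (joinUpTo v k).length) atTop atTop :=
    tendsto_length_joinUpTo fun N => ⟨_, hjoin N ▸ le_length_joinUpTo hne N⟩
  obtain ⟨ζ, hζ⟩ := exists_forall_prefixO (fun _ _ => joinUpTo_isPrefix v) hlen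
  refine ⟨ζ, ⟨v, hvV, hlen, hζ⟩, fun n => (hζ (joinUpTo l (n + 1)).length).isFactor_of_isInfix ?_⟩
  rw [hjoin (n + 1), joinUpTo_succ]
  exact (List.suffix_append _ _).isInfix

theorem exists_rich_mem_omegaPow [Countable α] [Nonempty α] (h : InfixComplete (star V)) :
    ∃ ξ ∈ omegaPow V, Rich ξ := by
  obtain ⟨e, he⟩ := exists_surjective_nat (List α)
  let a : α := Classical.arbitrary α
  -- Padding with a letter makes every block nonempty, so the concatenation is infinite.
  choose x y l hlV hl using fun n => h (e n ++ [a])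
  obtain ⟨ζ, hζ, hfac⟩ := exists_mem_omegaPow_isFactor_flatten l hlV
    (fun n => by simp [← hl n])
  refine ⟨ζ, hζ, fun w => ?_⟩
  obtain ⟨n, rfl⟩ := he w
  exact (hfac n).of_isInfix ((List.prefix_append _ [a]).isInfix.trans
    (hl n ▸ List.infix_append (x n) _ (y n)))

/-- `V^ω` contains a rich ω-word iff `V*` is infix complete. -/
theorem omegaPow_rich_iff_star_infixComplete {α : Type*} [Fintype α] [Nonempty α]
    (V : Set (List α)) :
    (∃ ξ ∈ omegaPow V, Rich ξ) ↔ InfixComplete (star V) :=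
  ⟨fun ⟨_, hξ, hrich⟩ => infixComplete_star_of_rich hξ hrich, exists_rich_mem_omegaPow⟩

end Sparse
end

section
/- For every regular tree language L ⊆ ℬ^Σ over a finite nonempty alphabet Σ there exists n ∈ ℕ such that for all trees S ∈ ℬ^Σ and T ∈ L with S ⪯ T there exist k ≤ n and trees T_1,…,T_k ∈ ℬ^Σ each of size strictly less than 2^n such that S ∈ L[T_k,…,T_1]^{-1}. -/
open Filter Topology

namespace Sparse

variable {α : Type*}

/-!
Fix an automaton for `L` with state set `Q`. The states realised by trees with fewer than `2 ^ k`
nodes grow with `k`, so they stabilise by `k = |Q|`, and from then on they are closed under the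
transitions: every run value is realised by a tree with fewer than `2 ^ |Q|` nodes.

Walking from the root of an accepted tree down to `S`, each step to a child is paid for by
replacing the sibling with such a small tree and recording it as the next quotient. The run
values handled by lists of length at most `k` grow with `k`, so they stabilise by
`k = |Option Q| = |Q| + 1`, and the stable set is closed under passing to children.
-/

lemma exists_le_card_eq_succ_of_monotone {X : Type*} [Finite X] {f : ℕ → Set X}
    (hf : Monotone f) : ∃ k ≤ Nat.card X, f k = f (k + 1) := by
  by_contra! hne
  have hgrow : ∀ k ≤ Nat.card X + 1, k ≤ (f k).ncard := by
    intro k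
    induction k with
    | zero => simp
    | succ k ih =>
      intro hk
      have : (f k).ncard < (f (k + 1)).ncard :=
        Set.ncard_lt_ncard ((hf k.le_succ).ssubset_of_ne (hne k (by omega)))
      omega
  have := (hgrow _ le_rfl).trans (Set.ncard_le_card _)
  omega

section Automaton

variable {Q : Type*} {Δ : Option Q → Option Q → α → Q → Prop}

def statesOfSizeLt (Δ : Option Q → Option Q → α → Q → Prop) (m : ℕ) : Set Q :=
  {q | ∃ T : BTree α, T.size < m ∧ Run Δ T (some q)}

lemma statesOfSizeLt_two_pow_monotone :
    Monotone fun k => statesOfSizeLt Δ (2 ^ k) :=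
  fun _ _ hjk _ ⟨T, hT, hrun⟩ =>
    ⟨T, hT.trans_le (Nat.pow_le_pow_right two_pos hjk), hrun⟩

lemma exists_run_size_lt_of_stable {k : ℕ}
    (hk : statesOfSizeLt Δ (2 ^ k) = statesOfSizeLt Δ (2 ^ (k + 1)))
    {T : BTree α} {q : Option Q} (hT : Run Δ T q) :
    ∃ T' : BTree α, T'.size < 2 ^ k ∧ Run Δ T' q := by
  induction hT with
  | nil => exact ⟨.nil, Nat.two_pow_pos k, .nil⟩
  | @node a _ _ _ _ q _ _ hΔ ihl ihr =>
    obtain ⟨l', hl', hrunl⟩ := ihl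
    obtain ⟨r', hr', hrunr⟩ := ihr
    have hq : q ∈ statesOfSizeLt Δ (2 ^ (k + 1)) := by
      refine ⟨.node a l' r', ?_, .node hrunl hrunr hΔ⟩
      simp only [BTree.size, pow_succ]
      omega
    rw [← hk] at hq
    exact hq

lemma exists_run_size_lt_two_pow_card [Finite Q] {T : BTree α} {q : Option Q}
    (hT : Run Δ T q) : ∃ T' : BTree α, T'.size < 2 ^ Nat.card Q ∧ Run Δ T' q := by
  obtain ⟨k, hk_le, hk⟩ := exists_le_card_eq_succ_of_monotone
    (statesOfSizeLt_two_pow_monotone (Δ := Δ))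
  obtain ⟨T', hT', hrun⟩ := exists_run_size_lt_of_stable hk hT
  exact ⟨T', hT'.trans_le (Nat.pow_le_pow_right two_pos hk_le), hrun⟩

lemma exists_run_mem_of_subtree {V : Set (Option Q)}
    (hV : ∀ {a : α} {l r : BTree α} {ql qr : Option Q} {q : Q}, Run Δ l ql → Run Δ r qr →
      Δ ql qr a q → some q ∈ V → ql ∈ V ∧ qr ∈ V)
    {S T : BTree α} (hST : BTree.Subtree S T) {q : Option Q} (hT : Run Δ T q) (hq : q ∈ V) :
    ∃ q' : Option Q, Run Δ S q' ∧ q' ∈ V := by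
  induction hST generalizing q with
  | refl => exact ⟨q, hT, hq⟩
  | left _ ih =>
    cases hT with
    | node hl hr hΔ => exact ih hl (hV hl hr hΔ hq).1
  | right _ ih =>
    cases hT with
    | node hl hr hΔ => exact ih hr (hV hl hr hΔ hq).2

def quotValues (L : Set (BTree α)) (Δ : Option Q → Option Q → α → Q → Prop) (m k : ℕ) :
    Set (Option Q) :=
  {q | ∃ Ts : List (BTree α), Ts.length ≤ k ∧ (∀ T' ∈ Ts, T'.size < m) ∧
    ∀ S : BTree α, Run Δ S q → S ∈ quotIter L Ts}

variable {L : Set (BTree α)} {m : ℕ}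

lemma quotValues_monotone : Monotone (quotValues L Δ m) :=
  fun _ _ hjk _ ⟨Ts, hlen, hsize, hmem⟩ => ⟨Ts, hlen.trans hjk, hsize, hmem⟩

lemma some_mem_quotValues_zero {F : Set Q} {q : Q} (hq : q ∈ F) :
    some q ∈ quotValues {T | TAccepts Δ F T} Δ m 0 :=
  ⟨[], le_rfl, by simp, fun _ hS => ⟨q, hq, hS⟩⟩

lemma mem_quotValues_succ_left {a : α} {ql qr : Option Q} {q : Q} {r : BTree α} {k : ℕ}
    (hΔ : Δ ql qr a q) (hr : Run Δ r qr) (hr_size : r.size < m)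
    (hq : some q ∈ quotValues L Δ m k) : ql ∈ quotValues L Δ m (k + 1) := by
  obtain ⟨Ts, hlen, hsize, hmem⟩ := hq
  exact ⟨r :: Ts, by simpa using hlen, List.forall_mem_cons.2 ⟨hr_size, hsize⟩,
    fun _ hS => Or.inl ⟨a, hmem _ (.node hS hr hΔ)⟩⟩

lemma mem_quotValues_succ_right {a : α} {ql qr : Option Q} {q : Q} {l : BTree α} {k : ℕ}
    (hΔ : Δ ql qr a q) (hl : Run Δ l ql) (hl_size : l.size < m)
    (hq : some q ∈ quotValues L Δ m k) : qr ∈ quotValues L Δ m (k + 1) := by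
  obtain ⟨Ts, hlen, hsize, hmem⟩ := hq
  exact ⟨l :: Ts, by simpa using hlen, List.forall_mem_cons.2 ⟨hl_size, hsize⟩,
    fun _ hS => Or.inr ⟨a, hmem _ (.node hl hS hΔ)⟩⟩

lemma quotValues_closed_of_stable [Finite Q] {k : ℕ} (hm : 2 ^ Nat.card Q ≤ m)
    (hk : quotValues L Δ m k = quotValues L Δ m (k + 1))
    {a : α} {l r : BTree α} {ql qr : Option Q} {q : Q} (hl : Run Δ l ql) (hr : Run Δ r qr)
    (hΔ : Δ ql qr a q) (hq : some q ∈ quotValues L Δ m k) :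
    ql ∈ quotValues L Δ m k ∧ qr ∈ quotValues L Δ m k := by
  obtain ⟨l', hl', hrunl⟩ := exists_run_size_lt_two_pow_card hl
  obtain ⟨r', hr', hrunr⟩ := exists_run_size_lt_two_pow_card hr
  rw [hk]
  exact ⟨mem_quotValues_succ_left hΔ hrunr (hr'.trans_le hm) hq,
    mem_quotValues_succ_right hΔ hrunl (hl'.trans_le hm) hq⟩

end Automaton

theorem subtree_mem_quotIter_of_regular_general {α : Type*}
    (L : Set (BTree α)) (hL : RegularTreeLang L) :
    ∃ n : ℕ, ∀ S T : BTree α, T ∈ L → BTree.Subtree S T →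
      ∃ Ts : List (BTree α), Ts.length ≤ n ∧ (∀ T' ∈ Ts, T'.size < 2 ^ n) ∧
        S ∈ quotIter L Ts := by
  obtain ⟨Q, _, Δ, F, rfl⟩ := hL
  obtain ⟨k, hk_le, hk⟩ := exists_le_card_eq_succ_of_monotone
    (quotValues_monotone (L := {T | TAccepts Δ F T}) (Δ := Δ) (m := 2 ^ (Nat.card Q + 1)))
  rw [Finite.card_option] at hk_le
  refine ⟨Nat.card Q + 1, fun S T ⟨qf, hqf, hT⟩ hST => ?_⟩
  obtain ⟨q, hS, Ts, hlen, hsize, hmem⟩ := exists_run_mem_of_subtree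
    (quotValues_closed_of_stable (Nat.pow_le_pow_right two_pos (Nat.le_succ _)) hk) hST hT
    (quotValues_monotone (Nat.zero_le k) (some_mem_quotValues_zero hqf))
  exact ⟨Ts, hlen.trans hk_le, hsize, hmem S hS⟩

/-- For every regular tree language `L` there is `n` such that whenever
`S ⪯ T ∈ L`, there are `k ≤ n` trees `T_k, …, T_1`, each of size `< 2^n`, with
`S ∈ L[T_k,…,T_1]⁻¹` (the list `Ts = [T_k, …, T_1]`). -/
theorem subtree_mem_quotIter_of_regular {α : Type*} [Fintype α] [Nonempty α]
    (L : Set (BTree α)) (hL : RegularTreeLang L) :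
    ∃ n : ℕ, ∀ S T : BTree α, T ∈ L → BTree.Subtree S T →
      ∃ Ts : List (BTree α), Ts.length ≤ n ∧ (∀ T' ∈ Ts, T'.size < 2 ^ n) ∧
        S ∈ quotIter L Ts :=
  subtree_mem_quotIter_of_regular_general L hL

end Sparse
end
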